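/- If C is a Z₂Z₄[ξ]-linear code of type (r,s;k₀;k₁,k₂), where ξ is a root of an irreducible polynomial of degree t, then |C| · |C⊥| = 2^{t(r + 2s)}. -/

import Mathlib

set_option synthInstance.maxHeartbeats 1000000
set_option maxHeartbeats 2000000

noncomputable section
open Polynomial

abbrev Z4 : Type := ZMod 4
abbrev Z2 : Type := ZMod 2

/-- The mod 2 reduction map `Z₄ → Z₂`. -/
def bar : Z4 →+* Z2 := ZMod.castHom (m := 2) (by norm_num) Z2

/-- The ring `R₄ = Z₄[x]/⟨h⟩` (for `h` basic primitive, the Galois ring `GR(4,m)`). -/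
abbrev R4 (h : Z4[X]) : Type := Z4[X] ⧸ Ideal.span {h}

/-- The ring `R₂ = Z₂[x]/⟨h̄⟩` (for `h` basic primitive, the field `F_{2^m}`). -/
abbrev R2 (h : Z4[X]) : Type := Z2[X] ⧸ Ideal.span {h.map bar}

/-- `ξ`, the class of `x` in `R₄`. -/
def xi (h : Z4[X]) : R4 h := Ideal.Quotient.mk _ X

/-- `ξ̄`, the class of `x` in `R₂`. -/
def xibar (h : Z4[X]) : R2 h := Ideal.Quotient.mk _ X

/-- The coefficientwise mod 2 reduction `R₄ → R₂`. -/
def barR (h : Z4[X]) : R4 h →+* R2 h :=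
  Ideal.quotientMap (Ideal.span {h.map bar}) (Polynomial.mapRingHom bar)
    (by
      rw [Ideal.span_le]
      intro p hp
      simp only [Set.mem_singleton_iff] at hp
      subst hp
      exact Ideal.mem_comap.mpr (Ideal.subset_span (by simp)))

/-- The canonical representative (of degree `< deg h`) of an element of `R₄`. -/
def rep4 (h : Z4[X]) (α : R4 h) : Z4[X] := Quotient.out α %ₘ h

/-- The canonical representative (of degree `< deg h̄`) of an element of `R₂`. -/
def rep2 (h : Z4[X]) (α : R2 h) : Z2[X] := Quotient.out α %ₘ (h.map bar)

/-- The Frobenius map `θ₄ : ∑ vᵢ ξ^i ↦ ∑ vᵢ ξ^{2i}` of `R₄`, as a bare function: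
substitute `ξ²` in the canonical representative. -/
def thetaFun4 (h : Z4[X]) (α : R4 h) : R4 h := Polynomial.aeval (xi h ^ 2) (rep4 h α)

/-- The Frobenius map `θ₂ : ∑ vᵢ ξ̄^i ↦ ∑ vᵢ ξ̄^{2i}` of `R₂`, as a bare function. -/
def thetaFun2 (h : Z4[X]) (α : R2 h) : R2 h := Polynomial.aeval (xibar h ^ 2) (rep2 h α)

/-- A lift `ι : R₂ → R₄` with `ι` mod 2 the identity: lift the coefficients of the
canonical representative from `{0,1}`. -/
def iota (h : Z4[X]) (α : R2 h) : R4 h :=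
  Ideal.Quotient.mk _ ((rep2 h α).sum fun i a => C ((a.val : Z4)) * X ^ i)

/-- `h` is a monic basic primitive polynomial of degree `m`:  `h` is monic, its mod 2
reduction `h̄` is irreducible over `Z₂`, and the root `ξ̄` of `h̄` is a primitive
element, i.e. has multiplicative order `2^m - 1`. -/
def BasicPrimitive (h : Z4[X]) (m : ℕ) : Prop :=
  h.Monic ∧ h.natDegree = m ∧ Irreducible (h.map bar) ∧ orderOf (xibar h) = 2 ^ m - 1

/-- The scalar multiplication `γ * (α,β) = (γ̄α, γβ)` making `R₂^r × R₄^s` (or any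
mixed-alphabet tuple space) an `R₄`-module. -/
def smulStar (h : Z4[X]) {α β : Type*} (γ : R4 h) (v : (α → R2 h) × (β → R4 h)) :
    (α → R2 h) × (β → R4 h) :=
  (fun i => barR h γ * v.1 i, fun j => γ * v.2 j)


/-- A `Z₂Z₄[ξ]`-linear code: an `R₄`-submodule of `R₂^r × R₄^s` (as a set). -/
def IsZ2Z4Linear (h : Z4[X]) {r s : ℕ} (C : Set ((Fin r → R2 h) × (Fin s → R4 h))) : Prop :=
  0 ∈ C ∧ (∀ u ∈ C, ∀ v ∈ C, u + v ∈ C) ∧ ∀ γ : R4 h, ∀ u ∈ C, smulStar h γ u ∈ C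

/-! ### Standard generator and parity-check matrices -/

/-- The set of all `R₄`-linear combinations (via the action `*`) of a finite family of
rows in `R₂^α × R₄^β`. -/
def rowSpan (h : Z4[X]) {ι α β : Type*} [Fintype ι]
    (rows : ι → (α → R2 h) × (β → R4 h)) : Set ((α → R2 h) × (β → R4 h)) :=
  {v | ∃ c : ι → R4 h, v = ∑ i, smulStar h (c i) (rows i)}

/-- The rows of the standard form generator matrix
`G = [[I_{k₀}, Ā₀₁ | 0, 0, 2T], [0, S | I_{k₁}, A₀₁, A₀₂], [0, 0 | 0, 2I_{k₂}, 2A₁₂]]`. -/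
def stdGenRows (h : Z4[X]) {r s k0 k1 k2 : ℕ}
    (A01b : Matrix (Fin k0) (Fin (r - k0)) (R2 h))
    (S : Matrix (Fin k1) (Fin (r - k0)) (R2 h))
    (T : Matrix (Fin k0) (Fin (s - k1 - k2)) (R4 h))
    (A01 : Matrix (Fin k1) (Fin k2) (R4 h))
    (A02 : Matrix (Fin k1) (Fin (s - k1 - k2)) (R4 h))
    (A12 : Matrix (Fin k2) (Fin (s - k1 - k2)) (R4 h)) :
    (Fin k0 ⊕ Fin k1 ⊕ Fin k2) →
      ((Fin k0 ⊕ Fin (r - k0)) → R2 h) × ((Fin k1 ⊕ Fin k2 ⊕ Fin (s - k1 - k2)) → R4 h) :=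
  fun row =>
    (fun col =>
      match row, col with
      | .inl i, .inl j => if i = j then 1 else 0
      | .inl i, .inr j => A01b i j
      | .inr (.inl i), .inr j => S i j
      | _, _ => 0,
     fun col =>
      match row, col with
      | .inl i, .inr (.inr j) => 2 * T i j
      | .inr (.inl i), .inl j => if i = j then 1 else 0
      | .inr (.inl i), .inr (.inl j) => A01 i j
      | .inr (.inl i), .inr (.inr j) => A02 i j
      | .inr (.inr i), .inr (.inl j) => if i = j then 2 else 0
      | .inr (.inr i), .inr (.inr j) => 2 * A12 i j
      | _, _ => 0)

/-- `C` is (permutation equivalent to) a code of type `(r,s;k₀;k₁,k₂)`:  after a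
permutation of the first `r` and of the last `s` coordinates (encoded by the
relabelings `e2`, `e4`) the code is exactly the `R₄`-span of the rows of the standard
form generator matrix. -/
def IsTypeCode (h : Z4[X]) (r s k0 k1 k2 : ℕ)
    (C : Set ((Fin r → R2 h) × (Fin s → R4 h))) : Prop :=
  ∃ (A01b : Matrix (Fin k0) (Fin (r - k0)) (R2 h))
    (S : Matrix (Fin k1) (Fin (r - k0)) (R2 h))
    (T : Matrix (Fin k0) (Fin (s - k1 - k2)) (R4 h))
    (A01 : Matrix (Fin k1) (Fin k2) (R4 h))
    (A02 : Matrix (Fin k1) (Fin (s - k1 - k2)) (R4 h))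
    (A12 : Matrix (Fin k2) (Fin (s - k1 - k2)) (R4 h))
    (e2 : Fin r ≃ (Fin k0 ⊕ Fin (r - k0)))
    (e4 : Fin s ≃ (Fin k1 ⊕ Fin k2 ⊕ Fin (s - k1 - k2))),
    (fun v : (Fin r → R2 h) × (Fin s → R4 h) => (v.1 ∘ e2.symm, v.2 ∘ e4.symm)) '' C
      = rowSpan h (stdGenRows h A01b S T A01 A02 A12)

/-- The inner product
`⟨u,v⟩ = 2 ∑ᵢ ι(aᵢdᵢ) + ∑ⱼ bⱼeⱼ ∈ R₄` on `R₂^α × R₄^β`. -/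
def innerP (h : Z4[X]) {α β : Type*} [Fintype α] [Fintype β]
    (u v : (α → R2 h) × (β → R4 h)) : R4 h :=
  2 * ∑ i, iota h (u.1 i * v.1 i) + ∑ j, u.2 j * v.2 j

/-- The dual code `C⊥ = {v : ⟨u,v⟩ = 0 for all u ∈ C}`. -/
def dualCode (h : Z4[X]) {α β : Type*} [Fintype α] [Fintype β]
    (C : Set ((α → R2 h) × (β → R4 h))) : Set ((α → R2 h) × (β → R4 h)) :=
  {v | ∀ u ∈ C, innerP h u v = 0}

/-- The rows of the standard form parity-check matrix
`H = [[−Ā₀₁ᵀ, I_{r−k₀} | −2Sᵀ, 0, 0], [−Tᵀ, 0 | −A₀₂ᵀ + A₁₂ᵀA₀₁ᵀ, −A₁₂ᵀ, I_{s−k₁−k₂}],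
[0, 0 | −2A₀₁ᵀ, 2I_{k₂}, 0]]`. -/
def stdParityRows (h : Z4[X]) {r s k0 k1 k2 : ℕ}
    (A01b : Matrix (Fin k0) (Fin (r - k0)) (R2 h))
    (S : Matrix (Fin k1) (Fin (r - k0)) (R2 h))
    (T : Matrix (Fin k0) (Fin (s - k1 - k2)) (R4 h))
    (A01 : Matrix (Fin k1) (Fin k2) (R4 h))
    (A02 : Matrix (Fin k1) (Fin (s - k1 - k2)) (R4 h))
    (A12 : Matrix (Fin k2) (Fin (s - k1 - k2)) (R4 h)) :
    (Fin (r - k0) ⊕ Fin (s - k1 - k2) ⊕ Fin k2) →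
      ((Fin k0 ⊕ Fin (r - k0)) → R2 h) × ((Fin k1 ⊕ Fin k2 ⊕ Fin (s - k1 - k2)) → R4 h) :=
  fun row =>
    (fun col =>
      match row, col with
      | .inl i, .inl j => -(A01b j i)
      | .inl i, .inr j => if i = j then 1 else 0
      | .inr (.inl i), .inl j => -(barR h (T j i))
      | _, _ => 0,
     fun col =>
      match row, col with
      | .inl i, .inl j => -(2 * iota h (S j i))
      | .inr (.inl i), .inl j => -(A02 j i) + ∑ c, A12 c i * A01 j c
      | .inr (.inl i), .inr (.inl j) => -(A12 j i)
      | .inr (.inl i), .inr (.inr j) => if i = j then 1 else 0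
      | .inr (.inr i), .inl j => -(2 * A01 j i)
      | .inr (.inr i), .inr (.inl j) => if i = j then 2 else 0
      | _, _ => 0)

/-!
Up to a permutation of coordinates, `C` is spanned by the rows of the standard form generator
matrix `G`, and `C⊥` by those of the parity-check matrix `H`: every row of `G` is orthogonal
to every row of `H`, and a vector orthogonal to all rows of `G` becomes `0` after subtracting
the `H`-combination that matches it on the non-pivot coordinates of `G`.

A code spanned by `k₀` rows with a pivot `1` in the binary part, `k₁` rows with a pivot `1` and
`k₂` rows with a pivot `2` in the quaternary part, all rows of the first and third kind being
divisible by `2` in the quaternary part, has `|R₂|^{k₀} |R₄|^{k₁} |R₂|^{k₂}` elements: the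
coefficients of the rows divisible by `2` only matter mod `2`, and the pivots recover the
coefficients. With `|R₂| = 2^t` and `|R₄| = 4^t` the exponents for `G` and `H` add up to
`t (r + 2s)`.
-/

section Reduction

variable {h : Z4[X]}

lemma ker_bar : RingHom.ker bar = Ideal.span {2} := by
  ext x
  rw [RingHom.mem_ker, Ideal.mem_span_singleton]
  revert x
  decide

lemma two_dvd_iff_map_bar_eq_zero {p : Z4[X]} : 2 ∣ p ↔ p.map bar = 0 := by
  rw [← Polynomial.coe_mapRingHom, ← RingHom.mem_ker, Polynomial.ker_mapRingHom, ker_bar,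
    Ideal.map_span, Set.image_singleton, map_ofNat, Ideal.mem_span_singleton]

lemma map_bar_eq_zero_of_two_mul_eq_zero {p : Z4[X]} (hp : 2 * p = 0) : p.map bar = 0 := by
  ext i
  have hi : (2 : Z4) * p.coeff i = 0 := by
    simpa [Polynomial.coeff_ofNat_mul] using congrArg (coeff · i) hp
  rw [coeff_map, coeff_zero]
  revert hi
  generalize p.coeff i = c
  revert c
  decide

lemma barR_mk (p : Z4[X]) :
    barR h (Ideal.Quotient.mk _ p) = Ideal.Quotient.mk _ (p.map bar) := by
  rw [barR, Ideal.quotientMap_mk, Polynomial.coe_mapRingHom]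

lemma mk_eq_two_mul_of_sub_eq {p q w : Z4[X]} (hw : p - h * q = 2 * w) :
    (Ideal.Quotient.mk _ p : R4 h) = 2 * Ideal.Quotient.mk _ w := by
  rw [← map_ofNat (Ideal.Quotient.mk _), ← map_mul, ← hw, Ideal.Quotient.mk_eq_mk_iff_sub_mem,
    sub_sub_cancel]
  exact Ideal.mul_mem_right _ _ (Ideal.mem_span_singleton_self h)

lemma two_dvd_of_barR_eq_zero {x : R4 h} (hx : barR h x = 0) : 2 ∣ x := by
  obtain ⟨p, rfl⟩ := Ideal.Quotient.mk_surjective x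
  rw [barR_mk, Ideal.Quotient.eq_zero_iff_mem, Ideal.mem_span_singleton] at hx
  obtain ⟨qb, hqb⟩ := hx
  obtain ⟨q, rfl⟩ := Polynomial.map_surjective bar (ZMod.ringHom_surjective bar) qb
  obtain ⟨w, hw⟩ := two_dvd_iff_map_bar_eq_zero.mpr
    (show (p - h * q).map bar = 0 by rw [Polynomial.map_sub, Polynomial.map_mul, hqb, sub_self])
  exact ⟨_, mk_eq_two_mul_of_sub_eq hw⟩

lemma two_dvd_of_two_mul_eq_zero (hm : h.Monic) {x : R4 h} (hx : 2 * x = 0) : 2 ∣ x := by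
  obtain ⟨p, rfl⟩ := Ideal.Quotient.mk_surjective x
  rw [← map_ofNat (Ideal.Quotient.mk _), ← map_mul, Ideal.Quotient.eq_zero_iff_mem,
    Ideal.mem_span_singleton] at hx
  obtain ⟨q, hq⟩ := hx
  -- reducing `2 p = h q` mod 2 gives `h̄ q̄ = 0`, so `q = 2 q'` and `2 (p - h q') = 0`
  have hq0 : q.map bar = 0 := by
    have := congrArg (Polynomial.map bar) hq
    rw [Polynomial.map_mul, Polynomial.map_mul, Polynomial.map_ofNat,
      (CharTwo.two_eq_zero : (2 : Z2[X]) = 0), zero_mul, eq_comm,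
      (hm.map bar).mul_right_eq_zero_iff] at this
    exact this
  obtain ⟨q', rfl⟩ := two_dvd_iff_map_bar_eq_zero.mpr hq0
  obtain ⟨w, hw⟩ := two_dvd_iff_map_bar_eq_zero.mpr
    (map_bar_eq_zero_of_two_mul_eq_zero (p := p - h * q') (by linear_combination hq))
  exact ⟨_, mk_eq_two_mul_of_sub_eq hw⟩

lemma two_mul_two_eq_zero : (2 : R4 h) * 2 = 0 := by
  rw [← map_ofNat (Ideal.Quotient.mk _), ← map_mul, ← map_ofNat C 2, ← map_mul,
    show (2 : Z4) * 2 = 0 by decide, map_zero, map_zero]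

lemma barR_iota (a : R2 h) : barR h (iota h a) = a := by
  have hlift : ((rep2 h a).sum fun i c => C ((c.val : Z4)) * X ^ i).map bar = rep2 h a := by
    conv_rhs => rw [← (rep2 h a).sum_C_mul_X_pow_eq]
    simp [Polynomial.sum, Polynomial.map_sum, ZMod.natCast_val]
  rw [iota, barR_mk, hlift, rep2, Polynomial.modByMonic_eq_sub_mul_div, map_sub,
    map_mul, Ideal.Quotient.mk_singleton_self, zero_mul, sub_zero]
  exact Quotient.out_eq a

lemma barR_surjective : Function.Surjective (barR h) :=
  fun a => ⟨iota h a, barR_iota a⟩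

lemma two_mul_eq_two_mul_of_barR_eq {x y : R4 h} (hxy : barR h x = barR h y) :
    2 * x = 2 * y := by
  obtain ⟨z, hz⟩ := two_dvd_of_barR_eq_zero (x := x - y) (by rw [map_sub, hxy, sub_self])
  linear_combination 2 * hz + z * two_mul_two_eq_zero

end Reduction

section TwoIota

variable {h : Z4[X]}

/-- Unlike `ι`, the map `a ↦ 2 ι(a)` is additive and `R₄`-linear: it is `2 y` for every lift
`y` of `a` (`twoIota_barR`). -/
def twoIota (h : Z4[X]) (a : R2 h) : R4 h := 2 * iota h a

lemma twoIota_barR (y : R4 h) : twoIota h (barR h y) = 2 * y :=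
  two_mul_eq_two_mul_of_barR_eq (barR_iota _)

lemma twoIota_zero : twoIota h 0 = 0 := by
  rw [← map_zero (barR h), twoIota_barR, mul_zero]

lemma twoIota_add (a b : R2 h) : twoIota h (a + b) = twoIota h a + twoIota h b := by
  obtain ⟨x, rfl⟩ := barR_surjective a
  obtain ⟨y, rfl⟩ := barR_surjective b
  rw [← map_add, twoIota_barR, twoIota_barR, twoIota_barR, mul_add]

lemma twoIota_neg (a : R2 h) : twoIota h (-a) = -twoIota h a := by
  obtain ⟨x, rfl⟩ := barR_surjective a
  rw [← map_neg, twoIota_barR, twoIota_barR]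
  ring

lemma twoIota_mul_barR (γ : R4 h) (a : R2 h) :
    twoIota h (barR h γ * a) = γ * twoIota h a := by
  obtain ⟨x, rfl⟩ := barR_surjective a
  rw [← map_mul, twoIota_barR, twoIota_barR, mul_left_comm]

lemma twoIota_injective (hm : h.Monic) : Function.Injective (twoIota h) := by
  intro a b hab
  obtain ⟨x, rfl⟩ := barR_surjective a
  obtain ⟨y, rfl⟩ := barR_surjective b
  rw [twoIota_barR, twoIota_barR] at hab
  obtain ⟨z, hz⟩ := two_dvd_of_two_mul_eq_zero hm (x := x - y) (by rw [mul_sub, hab, sub_self])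
  have h2 : (2 : R2 h) = 0 := by
    rw [← map_ofNat (Ideal.Quotient.mk _), (CharTwo.two_eq_zero : (2 : Z2[X]) = 0), map_zero]
  rw [← sub_eq_zero, ← map_sub, hz, map_mul, map_ofNat, h2, zero_mul]

end TwoIota

section Combo

variable {h : Z4[X]} {α β ι : Type*} [Fintype ι]

def combo (rows : ι → (α → R2 h) × (β → R4 h)) (d : ι → R4 h) :
    (α → R2 h) × (β → R4 h) :=
  ∑ i, smulStar h (d i) (rows i)

lemma combo_fst (rows : ι → (α → R2 h) × (β → R4 h)) (d : ι → R4 h) (a : α) :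
    (combo rows d).1 a = ∑ i, barR h (d i) * (rows i).1 a := by
  rw [combo, Prod.fst_sum, Finset.sum_apply]
  rfl

lemma combo_snd (rows : ι → (α → R2 h) × (β → R4 h)) (d : ι → R4 h) (b : β) :
    (combo rows d).2 b = ∑ i, d i * (rows i).2 b := by
  rw [combo, Prod.snd_sum, Finset.sum_apply]
  rfl

end Combo

section InnerProduct

variable {h : Z4[X]} {α β ι : Type*} [Fintype α] [Fintype β]

lemma innerP_eq (u v : (α → R2 h) × (β → R4 h)) :
    innerP h u v = ∑ i, twoIota h (u.1 i * v.1 i) + ∑ j, u.2 j * v.2 j := by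
  rw [innerP, Finset.mul_sum]
  rfl

lemma innerP_comm (u v : (α → R2 h) × (β → R4 h)) : innerP h u v = innerP h v u := by
  simp only [innerP, mul_comm]

lemma innerP_zero_left (v : (α → R2 h) × (β → R4 h)) : innerP h 0 v = 0 := by
  simp [innerP_eq, twoIota_zero]

lemma innerP_add_left (u u' v : (α → R2 h) × (β → R4 h)) :
    innerP h (u + u') v = innerP h u v + innerP h u' v := by
  simp only [innerP_eq, Prod.fst_add, Prod.snd_add, Pi.add_apply, add_mul, twoIota_add,
    Finset.sum_add_distrib]
  ring

lemma innerP_sub_left (u u' v : (α → R2 h) × (β → R4 h)) :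
    innerP h (u - u') v = innerP h u v - innerP h u' v := by
  rw [eq_sub_iff_add_eq, ← innerP_add_left, sub_add_cancel]

lemma innerP_smulStar_left (γ : R4 h) (u v : (α → R2 h) × (β → R4 h)) :
    innerP h (smulStar h γ u) v = γ * innerP h u v := by
  simp only [innerP_eq, smulStar, mul_assoc, twoIota_mul_barR, ← Finset.mul_sum, mul_add]

variable [Fintype ι]

lemma innerP_combo_left (rows : ι → (α → R2 h) × (β → R4 h)) (d : ι → R4 h)
    (v : (α → R2 h) × (β → R4 h)) :
    innerP h (combo rows d) v = ∑ i, d i * innerP h (rows i) v := by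
  rw [combo]
  induction (Finset.univ : Finset ι) using Finset.cons_induction with
  | empty => simp [innerP_zero_left]
  | cons i s hi ih => rw [Finset.sum_cons, innerP_add_left, ih, innerP_smulStar_left,
      Finset.sum_cons]

lemma innerP_combo_right (rows : ι → (α → R2 h) × (β → R4 h)) (d : ι → R4 h)
    (u : (α → R2 h) × (β → R4 h)) :
    innerP h u (combo rows d) = ∑ i, d i * innerP h u (rows i) := by
  simp only [innerP_comm u, innerP_combo_left]

lemma mem_dualCode_rowSpan_iff {rows : ι → (α → R2 h) × (β → R4 h)}
    {v : (α → R2 h) × (β → R4 h)} :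
    v ∈ dualCode h (rowSpan h rows) ↔ ∀ i, innerP h (rows i) v = 0 := by
  classical
  constructor
  · intro hv i
    have hi := hv (combo rows (Pi.single i 1)) ⟨_, rfl⟩
    simpa [innerP_combo_left, Pi.single_apply] using hi
  · rintro hv _ ⟨d, rfl⟩
    change innerP h (combo rows d) v = 0
    simp [innerP_combo_left, hv]

end InnerProduct

section PivotRows

variable {h : Z4[X]} {α β I0 I1 I2 : Type*} [Fintype I0] [Fintype I1] [Fintype I2]

lemma smulStar_eq_of_barR_eq {γ γ' : R4 h} (hγ : barR h γ = barR h γ')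
    {row : (α → R2 h) × (β → R4 h)} (hrow : ∀ j, 2 ∣ row.2 j) :
    smulStar h γ row = smulStar h γ' row := by
  refine Prod.ext (funext fun a => by simp only [smulStar, hγ]) (funext fun j => ?_)
  obtain ⟨z, hz⟩ := hrow j
  simp only [smulStar, hz]
  linear_combination z * two_mul_eq_two_mul_of_barR_eq hγ

def liftCoef (c : (I0 → R2 h) × (I1 → R4 h) × (I2 → R2 h)) : I0 ⊕ I1 ⊕ I2 → R4 h :=
  Sum.elim (fun i => iota h (c.1 i)) (Sum.elim c.2.1 fun i => iota h (c.2.2 i))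

lemma rowSpan_eq_range_combo_liftCoef (rows : I0 ⊕ I1 ⊕ I2 → (α → R2 h) × (β → R4 h))
    (hdvd0 : ∀ i j, 2 ∣ (rows (.inl i)).2 j) (hdvd2 : ∀ i j, 2 ∣ (rows (.inr (.inr i))).2 j) :
    rowSpan h rows = Set.range fun c => combo rows (liftCoef c) := by
  ext v
  constructor
  · rintro ⟨d, rfl⟩
    refine ⟨(fun i => barR h (d (.inl i)), fun i => d (.inr (.inl i)),
      fun i => barR h (d (.inr (.inr i)))), Finset.sum_congr rfl ?_⟩
    rintro (i | i | i) -
    · exact smulStar_eq_of_barR_eq (barR_iota _) (hdvd0 i)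
    · rfl
    · exact smulStar_eq_of_barR_eq (barR_iota _) (hdvd2 i)
  · rintro ⟨c, rfl⟩
    exact ⟨liftCoef c, rfl⟩

variable [DecidableEq I0] [DecidableEq I1] [DecidableEq I2]

lemma combo_liftCoef_injective (hm : h.Monic) (rows : I0 ⊕ I1 ⊕ I2 → (α → R2 h) × (β → R4 h))
    (q0 : I0 → α) (hq0 : ∀ i ρ, (rows ρ).1 (q0 i) = if ρ = .inl i then 1 else 0)
    (q1 : I1 → β) (hq1 : ∀ i ρ, (rows ρ).2 (q1 i) = if ρ = .inr (.inl i) then 1 else 0)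
    (q2 : I2 → β) (hq20 : ∀ i i', (rows (.inl i')).2 (q2 i) = 0)
    (hq22 : ∀ i i', (rows (.inr (.inr i'))).2 (q2 i) = if i' = i then 2 else 0) :
    Function.Injective fun c => combo rows (liftCoef c) := by
  have e0 : ∀ c i, (combo rows (liftCoef c)).1 (q0 i) = c.1 i := fun c i => by
    simp [combo_fst, hq0, liftCoef, barR_iota]
  have e1 : ∀ c i, (combo rows (liftCoef c)).2 (q1 i) = c.2.1 i := fun c i => by
    simp [combo_snd, hq1, liftCoef]
  have e2 : ∀ c i, (combo rows (liftCoef c)).2 (q2 i)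
      = ∑ x, c.2.1 x * (rows (.inr (.inl x))).2 (q2 i) + twoIota h (c.2.2 i) := fun c i => by
    simp [combo_snd, Fintype.sum_sum_type, liftCoef, hq20, hq22, twoIota, mul_comm]
  intro c c' (hcc : combo rows (liftCoef c) = combo rows (liftCoef c'))
  have h1 : c.1 = c'.1 := funext fun i => by rw [← e0 c i, ← e0 c' i, hcc]
  have h21 : c.2.1 = c'.2.1 := funext fun i => by rw [← e1 c i, ← e1 c' i, hcc]
  have h22 : c.2.2 = c'.2.2 := funext fun i => twoIota_injective hm <| add_left_cancel <| by
    rw [← e2 c i, h21, ← e2 c' i, hcc]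
  exact Prod.ext h1 (Prod.ext h21 h22)

lemma card_rowSpan_of_pivots (hm : h.Monic) (rows : I0 ⊕ I1 ⊕ I2 → (α → R2 h) × (β → R4 h))
    (hdvd0 : ∀ i j, 2 ∣ (rows (.inl i)).2 j) (hdvd2 : ∀ i j, 2 ∣ (rows (.inr (.inr i))).2 j)
    (q0 : I0 → α) (hq0 : ∀ i ρ, (rows ρ).1 (q0 i) = if ρ = .inl i then 1 else 0)
    (q1 : I1 → β) (hq1 : ∀ i ρ, (rows ρ).2 (q1 i) = if ρ = .inr (.inl i) then 1 else 0)
    (q2 : I2 → β) (hq20 : ∀ i i', (rows (.inl i')).2 (q2 i) = 0)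
    (hq22 : ∀ i i', (rows (.inr (.inr i'))).2 (q2 i) = if i' = i then 2 else 0) :
    Nat.card (rowSpan h rows) = Nat.card ((I0 → R2 h) × (I1 → R4 h) × (I2 → R2 h)) := by
  rw [rowSpan_eq_range_combo_liftCoef rows hdvd0 hdvd2, Nat.card_range_of_injective
    (combo_liftCoef_injective hm rows q0 hq0 q1 hq1 q2 hq20 hq22)]

end PivotRows

section Cardinality

lemma card_quotient_span_monic {R : Type*} [CommRing R] {f : R[X]} (hf : f.Monic) :
    Nat.card (R[X] ⧸ Ideal.span {f}) = Nat.card R ^ f.natDegree := by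
  change Nat.card (AdjoinRoot f) = _
  rw [Nat.card_congr (AdjoinRoot.powerBasis' hf).basis.equivFun.toEquiv, Nat.card_fun,
    Nat.card_fin, AdjoinRoot.powerBasis'_dim]

variable {h : Z4[X]}

lemma card_mixedTuples (hm : h.Monic) (I0 I1 I2 : Type*) [Fintype I0] [Fintype I1] [Fintype I2] :
    Nat.card ((I0 → R2 h) × (I1 → R4 h) × (I2 → R2 h))
      = 2 ^ (h.natDegree * (Fintype.card I0 + 2 * Fintype.card I1 + Fintype.card I2)) := by
  simp only [Nat.card_prod, Nat.card_fun, card_quotient_span_monic hm,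
    card_quotient_span_monic (hm.map bar), hm.natDegree_map, Nat.card_eq_fintype_card, ZMod.card]
  rw [show 4 ^ h.natDegree = 2 ^ (2 * h.natDegree) by rw [pow_mul]; norm_num]
  ring

end Cardinality

section StandardForm

variable {h : Z4[X]} {r s k0 k1 k2 : ℕ}
  (A01b : Matrix (Fin k0) (Fin (r - k0)) (R2 h)) (S : Matrix (Fin k1) (Fin (r - k0)) (R2 h))
  (T : Matrix (Fin k0) (Fin (s - k1 - k2)) (R4 h)) (A01 : Matrix (Fin k1) (Fin k2) (R4 h))
  (A02 : Matrix (Fin k1) (Fin (s - k1 - k2)) (R4 h))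
  (A12 : Matrix (Fin k2) (Fin (s - k1 - k2)) (R4 h))

lemma innerP_stdGenRows_stdParityRows (ρ : Fin k0 ⊕ Fin k1 ⊕ Fin k2)
    (σ : Fin (r - k0) ⊕ Fin (s - k1 - k2) ⊕ Fin k2) :
    innerP h (stdGenRows h A01b S T A01 A02 A12 ρ) (stdParityRows h A01b S T A01 A02 A12 σ)
      = 0 := by
  obtain i | i | i := ρ <;> obtain j | j | j := σ <;>
    simp only [innerP_eq, stdGenRows, stdParityRows, Fintype.sum_sum_type] <;>
    simp [mul_ite, ite_mul, apply_ite (twoIota h), twoIota_zero, twoIota_neg, twoIota_barR,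
      two_mul_two_eq_zero, Finset.sum_ite_eq]
  · rw [twoIota]; ring
  · have : ∑ x, A01 i x * -A12 x j = -∑ c, A12 c j * A01 i c := by
      rw [← Finset.sum_neg_distrib]
      exact Finset.sum_congr rfl fun x _ => by ring
    rw [this]
    ring
  · ring
  · ring

lemma innerP_stdGenRows_inl (i : Fin k0)
    (w : ((Fin k0 ⊕ Fin (r - k0)) → R2 h) × ((Fin k1 ⊕ Fin k2 ⊕ Fin (s - k1 - k2)) → R4 h)) :
    innerP h (stdGenRows h A01b S T A01 A02 A12 (.inl i)) w
      = twoIota h (w.1 (.inl i)) + ∑ x, twoIota h (A01b i x * w.1 (.inr x))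
        + ∑ x, 2 * T i x * w.2 (.inr (.inr x)) := by
  simp [innerP_eq, stdGenRows, Fintype.sum_sum_type, ite_mul, apply_ite (twoIota h),
    twoIota_zero]

lemma innerP_stdGenRows_inr_inl (i : Fin k1)
    (w : ((Fin k0 ⊕ Fin (r - k0)) → R2 h) × ((Fin k1 ⊕ Fin k2 ⊕ Fin (s - k1 - k2)) → R4 h)) :
    innerP h (stdGenRows h A01b S T A01 A02 A12 (.inr (.inl i))) w
      = ∑ x, twoIota h (S i x * w.1 (.inr x)) + w.2 (.inl i)
        + ∑ x, A01 i x * w.2 (.inr (.inl x)) + ∑ x, A02 i x * w.2 (.inr (.inr x)) := by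
  simp only [stdGenRows, innerP_eq, Fintype.sum_sum_type, zero_mul, twoIota_zero,
    Finset.sum_const_zero, zero_add, ite_mul, one_mul, Finset.sum_ite_eq, Finset.mem_univ,
    ↓reduceIte]
  ring

lemma innerP_stdGenRows_inr_inr (i : Fin k2)
    (w : ((Fin k0 ⊕ Fin (r - k0)) → R2 h) × ((Fin k1 ⊕ Fin k2 ⊕ Fin (s - k1 - k2)) → R4 h)) :
    innerP h (stdGenRows h A01b S T A01 A02 A12 (.inr (.inr i))) w
      = 2 * (w.2 (.inr (.inl i)) + ∑ x, A12 i x * w.2 (.inr (.inr x))) := by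
  simp [innerP_eq, stdGenRows, Fintype.sum_sum_type, ite_mul, twoIota_zero, mul_add,
    Finset.mul_sum, mul_assoc]

lemma eq_zero_of_forall_innerP_stdGenRows_eq_zero (hm : h.Monic)
    {w : ((Fin k0 ⊕ Fin (r - k0)) → R2 h) × ((Fin k1 ⊕ Fin k2 ⊕ Fin (s - k1 - k2)) → R4 h)}
    (hw : ∀ ρ, innerP h (stdGenRows h A01b S T A01 A02 A12 ρ) w = 0)
    (hw1 : ∀ j, w.1 (.inr j) = 0) (hw2 : ∀ j, w.2 (.inr j) = 0) : w = 0 := by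
  have h1 : ∀ i, w.1 (.inl i) = 0 := fun i => twoIota_injective hm <| by
    simpa [innerP_stdGenRows_inl, hw1, hw2, twoIota_zero] using hw (.inl i)
  have h2 : ∀ i, w.2 (.inl i) = 0 := fun i => by
    simpa [innerP_stdGenRows_inr_inl, hw1, hw2, twoIota_zero] using hw (.inr (.inl i))
  refine Prod.ext (funext ?_) (funext ?_)
  · rintro (j | j)
    exacts [h1 j, hw1 j]
  · rintro (j | j)
    exacts [h2 j, hw2 j]

lemma exists_combo_stdParityRows_eq_on_free (hm : h.Monic)
    {v : ((Fin k0 ⊕ Fin (r - k0)) → R2 h) × ((Fin k1 ⊕ Fin k2 ⊕ Fin (s - k1 - k2)) → R4 h)}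
    (hv : ∀ i, innerP h (stdGenRows h A01b S T A01 A02 A12 (.inr (.inr i))) v = 0) :
    ∃ d, (∀ j, (combo (stdParityRows h A01b S T A01 A02 A12) d).1 (.inr j) = v.1 (.inr j)) ∧
      ∀ j, (combo (stdParityRows h A01b S T A01 A02 A12) d).2 (.inr j) = v.2 (.inr j) := by
  choose m hm2 using fun i => two_dvd_of_two_mul_eq_zero hm
    ((innerP_stdGenRows_inr_inr A01b S T A01 A02 A12 i v).symm.trans (hv i))
  refine ⟨Sum.elim (fun j => iota h (v.1 (.inr j))) (Sum.elim (fun j => v.2 (.inr (.inr j))) m),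
    fun j => ?_, ?_⟩
  · simp [combo_fst, Fintype.sum_sum_type, stdParityRows, barR_iota]
  · rintro (j | j)
    · simp only [combo_snd, stdParityRows, Fintype.sum_sum_type, Sum.elim_inl, mul_zero,
        Finset.sum_const_zero, Sum.elim_inr, mul_ite, Finset.sum_ite_eq', Finset.mem_univ,
        ↓reduceIte, zero_add]
      have hsum : ∑ x, v.2 (.inr (.inr x)) * -A12 j x = -∑ x, A12 j x * v.2 (.inr (.inr x)) := by
        rw [← Finset.sum_neg_distrib]
        exact Finset.sum_congr rfl fun x _ => by ring
      rw [hsum]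
      linear_combination -hm2 j
    · simp [combo_snd, Fintype.sum_sum_type, stdParityRows]

lemma dualCode_rowSpan_stdGenRows (hm : h.Monic) :
    dualCode h (rowSpan h (stdGenRows h A01b S T A01 A02 A12))
      = rowSpan h (stdParityRows h A01b S T A01 A02 A12) := by
  have hcombo : ∀ d ρ, innerP h (stdGenRows h A01b S T A01 A02 A12 ρ)
      (combo (stdParityRows h A01b S T A01 A02 A12) d) = 0 := fun d ρ => by
    simp [innerP_combo_right, innerP_stdGenRows_stdParityRows]
  ext v
  rw [mem_dualCode_rowSpan_iff]
  constructor
  · intro hv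
    obtain ⟨d, hd1, hd2⟩ :=
      exists_combo_stdParityRows_eq_on_free A01b S T A01 A02 A12 hm fun i => hv (.inr (.inr i))
    refine ⟨d, (sub_eq_zero.mp ?_ : v = combo _ d)⟩
    refine eq_zero_of_forall_innerP_stdGenRows_eq_zero A01b S T A01 A02 A12 hm
      (fun ρ => ?_) (fun j => ?_) (fun j => ?_)
    · rw [innerP_comm, innerP_sub_left, innerP_comm, hv, innerP_comm, hcombo, sub_zero]
    · rw [Prod.fst_sub, Pi.sub_apply, hd1, sub_self]
    · rw [Prod.snd_sub, Pi.sub_apply, hd2, sub_self]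
  · rintro ⟨d, rfl⟩ ρ
    exact hcombo d ρ

lemma card_rowSpan_stdGenRows (hm : h.Monic) :
    Nat.card (rowSpan h (stdGenRows h A01b S T A01 A02 A12))
      = 2 ^ (h.natDegree * (k0 + 2 * k1 + k2)) := by
  rw [card_rowSpan_of_pivots hm _ (fun i j => ?_) (fun i j => ?_) Sum.inl (fun i ρ => ?_)
    Sum.inl (fun i ρ => ?_) (fun i => .inr (.inl i)) (fun i i' => rfl) (fun i i' => ?_),
    card_mixedTuples hm, Fintype.card_fin, Fintype.card_fin, Fintype.card_fin]
  · obtain _ | _ | _ := j <;> simp [stdGenRows]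
  · obtain _ | _ | _ := j <;> simp only [stdGenRows] <;> try split
    all_goals first | exact dvd_zero 2 | exact dvd_refl 2 | exact dvd_mul_right 2 _
  · obtain _ | _ | _ := ρ <;> simp [stdGenRows, eq_comm]
  · obtain _ | _ | _ := ρ <;> simp [stdGenRows, eq_comm]
  · simp [stdGenRows, eq_comm]

lemma card_rowSpan_stdParityRows (hm : h.Monic) :
    Nat.card (rowSpan h (stdParityRows h A01b S T A01 A02 A12))
      = 2 ^ (h.natDegree * ((r - k0) + 2 * (s - k1 - k2) + k2)) := by
  rw [card_rowSpan_of_pivots hm _ (fun i j => ?_) (fun i j => ?_) Sum.inr (fun i ρ => ?_)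
    (fun i => .inr (.inr i)) (fun i ρ => ?_) (fun i => .inr (.inl i)) (fun i i' => rfl)
    (fun i i' => ?_), card_mixedTuples hm, Fintype.card_fin, Fintype.card_fin, Fintype.card_fin]
  · obtain _ | _ | _ := j <;> simp only [stdParityRows]
    all_goals first | exact dvd_zero 2 | exact (dvd_mul_right 2 _).neg_right
  · obtain _ | _ | _ := j <;> simp only [stdParityRows] <;> try split
    all_goals first | exact dvd_zero 2 | exact dvd_refl 2 | exact (dvd_mul_right 2 _).neg_right
  · obtain _ | _ | _ := ρ <;> simp [stdParityRows, eq_comm]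
  · obtain _ | _ | _ := ρ <;> simp [stdParityRows, eq_comm]
  · simp [stdParityRows, eq_comm]

end StandardForm

section Relabel

variable {h : Z4[X]} {α α' β β' : Type*} [Fintype α] [Fintype α'] [Fintype β] [Fintype β']

def relabel (h : Z4[X]) (e2 : α ≃ α') (e4 : β ≃ β') :
    (α → R2 h) × (β → R4 h) ≃ (α' → R2 h) × (β' → R4 h) where
  toFun v := (v.1 ∘ e2.symm, v.2 ∘ e4.symm)
  invFun v := (v.1 ∘ e2, v.2 ∘ e4)
  left_inv v := by simp [Function.comp_def]
  right_inv v := by simp [Function.comp_def]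

lemma innerP_relabel (e2 : α ≃ α') (e4 : β ≃ β') (u v : (α → R2 h) × (β → R4 h)) :
    innerP h (relabel h e2 e4 u) (relabel h e2 e4 v) = innerP h u v := by
  simp only [innerP, relabel, Equiv.coe_fn_mk, Function.comp_apply,
    Equiv.sum_comp e2.symm (fun i => iota h (u.1 i * v.1 i)),
    Equiv.sum_comp e4.symm (fun j => u.2 j * v.2 j)]

lemma dualCode_image_relabel (e2 : α ≃ α') (e4 : β ≃ β') (C : Set ((α → R2 h) × (β → R4 h))) :
    dualCode h (relabel h e2 e4 '' C) = relabel h e2 e4 '' dualCode h C := by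
  ext w
  obtain ⟨v, rfl⟩ := (relabel h e2 e4).surjective w
  simp only [dualCode, Set.mem_ofPred_eq, Set.forall_mem_image, innerP_relabel,
    (relabel h e2 e4).injective.mem_set_image]

end Relabel

theorem card_mul_card_dual_general
    (t : ℕ) (h : Z4[X]) (hbp : BasicPrimitive h t)
    (r s k0 k1 k2 : ℕ)
    (C : Set ((Fin r → R2 h) × (Fin s → R4 h)))
    (htype : IsTypeCode h r s k0 k1 k2 C) :
    Nat.card C * Nat.card (dualCode h C) = 2 ^ (t * (r + 2 * s)) := by
  obtain ⟨hm, rfl, -, -⟩ := hbp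
  obtain ⟨A01b, S, T, A01, A02, A12, e2, e4, himg⟩ := htype
  change relabel h e2 e4 '' C = _ at himg
  have hr : r = k0 + (r - k0) := by simpa using Fintype.card_congr e2
  have hs : s = k1 + (k2 + (s - k1 - k2)) := by simpa using Fintype.card_congr e4
  rw [← Nat.card_image_of_injective (relabel h e2 e4).injective C,
    ← Nat.card_image_of_injective (relabel h e2 e4).injective (dualCode h C),
    ← dualCode_image_relabel, himg, dualCode_rowSpan_stdGenRows _ _ _ _ _ _ hm,
    card_rowSpan_stdGenRows _ _ _ _ _ _ hm, card_rowSpan_stdParityRows _ _ _ _ _ _ hm,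
    ← pow_add, ← mul_add]
  congr 2
  omega

/-- For a `Z₂Z₄[ξ]`-linear code of type `(r,s;k₀;k₁,k₂)`, with `ξ` a
root of an irreducible polynomial of degree `t`, one has `|C|·|C⊥| = 2^{t(r+2s)}`. -/
theorem card_mul_card_dual
    (t : ℕ) (ht : 1 ≤ t) (h : Z4[X]) (hbp : BasicPrimitive h t)
    (r s k0 k1 k2 : ℕ) (hr : 0 < r) (hs : 0 < s)
    (C : Set ((Fin r → R2 h) × (Fin s → R4 h))) (hC : IsZ2Z4Linear h C)
    (htype : IsTypeCode h r s k0 k1 k2 C) :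
    Nat.card C * Nat.card (dualCode h C) = 2 ^ (t * (r + 2 * s)) :=
  card_mul_card_dual_general t h hbp r s k0 k1 k2 C htype
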